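/- arXiv:2008.13203 — 4 statements merged into one kernel-verified Lean document; each statement's English description precedes it below -/
import Mathlib

section
/- Let S be a quasi-thin association scheme (k_i ≤ 2 for all i). Then S is a p-transitive scheme if and only if p > 2, or p = 2 and S equals the complex product O^ϑ(S)O_ϑ(S) of its thin residue and thin radical. -/
open scoped Classical

/-- An association scheme of class `d` on a nonempty finite set `X`:
a partition of `X × X` into nonempty relations `r 0, …, r d` with
`r 0` the diagonal, closed under converse (`star`), and with
intersection numbers `pNum i j k`. -/
structure AssocScheme (X : Type*) [Fintype X] [Nonempty X] (d : ℕ) where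
  r : Fin (d + 1) → Set (X × X)
  r_nonempty : ∀ i, (r i).Nonempty
  existsUnique_rel : ∀ q : X × X, ∃! i, q ∈ r i
  r_zero : r 0 = {q : X × X | q.1 = q.2}
  star : Fin (d + 1) → Fin (d + 1)
  mem_star : ∀ (i : Fin (d + 1)) (q : X × X), q ∈ r (star i) ↔ (q.2, q.1) ∈ r i
  pNum : Fin (d + 1) → Fin (d + 1) → Fin (d + 1) → ℕ
  ncard_eq : ∀ (i j k : Fin (d + 1)), ∀ q ∈ r k,
    {z : X | (q.1, z) ∈ r i ∧ (z, q.2) ∈ r j}.ncard = pNum i j k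

namespace AssocScheme

variable {X : Type*} [Fintype X] [Nonempty X] {d : ℕ}

/-- The valency `k_i = p_{i i*}^0` of the relation `R_i`. -/
def val (S : AssocScheme X d) (i : Fin (d + 1)) : ℕ := S.pNum i (S.star i) 0

/-- The complex product `UV = {R_k : p_{uv}^k > 0 for some R_u ∈ U, R_v ∈ V}`. -/
def cmul (S : AssocScheme X d) (U V : Set (Fin (d + 1))) : Set (Fin (d + 1)) :=
  {k | ∃ u ∈ U, ∃ v ∈ V, 0 < S.pNum u v k}

/-- A nonempty subset `T` is closed if `T*T ⊆ T`. -/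
def IsClosedSubset (S : AssocScheme X d) (T : Set (Fin (d + 1))) : Prop :=
  T.Nonempty ∧ S.cmul (S.star '' T) T ⊆ T

/-- The thin radical `O_ϑ(S) = {R_i : k_i = 1}`. -/
def thinRadical (S : AssocScheme X d) : Set (Fin (d + 1)) := {i | S.val i = 1}

/-- A closed subset `T` is strongly normal if `R_{i*} T R_i ⊆ T` for all `i`. -/
def IsStronglyNormal (S : AssocScheme X d) (T : Set (Fin (d + 1))) : Prop :=
  S.IsClosedSubset T ∧ ∀ i : Fin (d + 1), S.cmul (S.cmul {S.star i} T) {i} ⊆ T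

/-- The thin residue `O^ϑ(S)`: the intersection of all strongly normal closed subsets. -/
def thinResidue (S : AssocScheme X d) : Set (Fin (d + 1)) :=
  ⋂₀ {T | S.IsStronglyNormal T}

/-- `⟨H⟩`: the intersection of all closed subsets containing `H`. -/
def closure (S : AssocScheme X d) (H : Set (Fin (d + 1))) : Set (Fin (d + 1)) :=
  ⋂₀ {T | S.IsClosedSubset T ∧ H ⊆ T}

/-- The adjacency matrix `A̅_i` of `R_i`, with entries in `𝔽`. -/
noncomputable def adj (S : AssocScheme X d) (𝔽 : Type*) [Field 𝔽] (i : Fin (d + 1)) :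
    Matrix X X 𝔽 :=
  Matrix.of fun x y => if (x, y) ∈ S.r i then 1 else 0

/-- `v` spans a trivial `𝔽S`-submodule of the regular `𝔽S`-module:
`v` is a nonzero element of `𝔽S` with `A̅_i v = k̅_i v` for all `i`. -/
def IsTrivialVector (S : AssocScheme X d) (𝔽 : Type*) [Field 𝔽] (v : Matrix X X 𝔽) : Prop :=
  v ≠ 0 ∧ v ∈ Submodule.span 𝔽 (Set.range (S.adj 𝔽)) ∧
    ∀ i : Fin (d + 1), S.adj 𝔽 i * v = (S.val i : 𝔽) • v

/-- `S` is `p`-transitive over `𝔽` (of characteristic `p`) if the regular `𝔽S`-module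
contains a unique trivial `𝔽S`-submodule. -/
def IsPTransitive (S : AssocScheme X d) (𝔽 : Type*) [Field 𝔽] : Prop :=
  ∃! W : Submodule 𝔽 (Matrix X X 𝔽),
    ∃ v : Matrix X X 𝔽, S.IsTrivialVector 𝔽 v ∧ W = Submodule.span 𝔽 {v}

/-- A subset `T ⊆ S` is singular if `O_ϑ(S) ⊆ T` and
`R_x R_{y*} R_y R_z ⊆ T` for all `R_x ∈ O_ϑ(S)`, `R_y ∈ S`, `R_z ∈ T`. -/
def IsSingular (S : AssocScheme X d) (T : Set (Fin (d + 1))) : Prop :=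
  S.thinRadical ⊆ T ∧ ∀ x ∈ S.thinRadical, ∀ y : Fin (d + 1), ∀ z ∈ T,
    S.cmul (S.cmul (S.cmul {x} {S.star y}) {y}) {z} ⊆ T

/-- `S_{p'} = {R_i ∈ S : p ∤ k_i}`. -/
def pPrimePart (S : AssocScheme X d) (p : ℕ) : Set (Fin (d + 1)) :=
  {i | ¬ p ∣ S.val i}

end AssocScheme

namespace AssocScheme

variable {X : Type*} [Fintype X] [Nonempty X] {d : ℕ}

variable (S : AssocScheme X d)

section Basic

lemma mem_r_zero_iff (x y : X) : (x, y) ∈ S.r 0 ↔ x = y := by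
  rw [S.r_zero]; exact Iff.rfl

lemma mem_diag (x : X) : (x, x) ∈ S.r 0 := (S.mem_r_zero_iff x x).mpr rfl

noncomputable def idx (x y : X) : Fin (d + 1) :=
  (S.existsUnique_rel (x, y)).choose

lemma mem_idx (x y : X) : (x, y) ∈ S.r (S.idx x y) :=
  (S.existsUnique_rel (x, y)).choose_spec.1

lemma idx_eq {x y : X} {i : Fin (d + 1)} (h : (x, y) ∈ S.r i) : S.idx x y = i :=
  ((S.existsUnique_rel (x, y)).choose_spec.2 i h).symm

lemma rel_eq_of_both {x y : X} {i j : Fin (d + 1)} (hi : (x, y) ∈ S.r i)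
    (hj : (x, y) ∈ S.r j) : i = j := by
  rw [← S.idx_eq hi, ← S.idx_eq hj]

lemma mem_star' {i : Fin (d + 1)} {x y : X} : (x, y) ∈ S.r (S.star i) ↔ (y, x) ∈ S.r i :=
  S.mem_star i (x, y)

lemma star_star (i : Fin (d + 1)) : S.star (S.star i) = i := by
  obtain ⟨⟨x, y⟩, hxy⟩ := S.r_nonempty i
  have : (x, y) ∈ S.r (S.star (S.star i)) := S.mem_star'.mpr (S.mem_star'.mpr hxy)
  exact S.rel_eq_of_both this hxy

lemma star_zero : S.star 0 = 0 := by
  have h : ((Classical.arbitrary X, Classical.arbitrary X) : X × X) ∈ S.r (S.star 0) :=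
    S.mem_star'.mpr (S.mem_diag _)
  exact S.rel_eq_of_both h (S.mem_diag _)

lemma pos_of_path {i j k : Fin (d + 1)} {x z y : X} (h1 : (x, z) ∈ S.r i)
    (h2 : (z, y) ∈ S.r j) (h3 : (x, y) ∈ S.r k) : 0 < S.pNum i j k := by
  have h := S.ncard_eq i j k (x, y) h3
  rw [← h]
  have hfin : {z : X | (x, z) ∈ S.r i ∧ (z, y) ∈ S.r j}.Finite := Set.toFinite _
  exact (Set.ncard_pos hfin).mpr ⟨z, h1, h2⟩

lemma path_of_pos {i j k : Fin (d + 1)} (hp : 0 < S.pNum i j k) {x y : X}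
    (h : (x, y) ∈ S.r k) : ∃ z, (x, z) ∈ S.r i ∧ (z, y) ∈ S.r j := by
  have h2 := S.ncard_eq i j k (x, y) h
  have : {z : X | (x, z) ∈ S.r i ∧ (z, y) ∈ S.r j}.ncard ≠ 0 := by
    rw [h2]; omega
  exact Set.nonempty_of_ncard_ne_zero this

lemma pos_shift_right {i j k : Fin (d + 1)} (hp : 0 < S.pNum i j k) :
    0 < S.pNum k (S.star j) i := by
  obtain ⟨⟨x, y⟩, hk⟩ := S.r_nonempty k
  obtain ⟨z, h1, h2⟩ := S.path_of_pos hp hk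
  exact S.pos_of_path hk (S.mem_star'.mpr h2) h1

lemma pos_shift_left {i j k : Fin (d + 1)} (hp : 0 < S.pNum i j k) :
    0 < S.pNum (S.star i) k j := by
  obtain ⟨⟨x, y⟩, hk⟩ := S.r_nonempty k
  obtain ⟨z, h1, h2⟩ := S.path_of_pos hp hk
  exact S.pos_of_path (S.mem_star'.mpr h1) hk h2

lemma card_out (i : Fin (d + 1)) (x : X) :
    (Finset.univ.filter fun z => (x, z) ∈ S.r i).card = S.val i := by
  have h := S.ncard_eq i (S.star i) 0 (x, x) (S.mem_diag x)
  have hset : {z : X | (x, z) ∈ S.r i ∧ (z, x) ∈ S.r (S.star i)} =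
      ↑(Finset.univ.filter fun z => (x, z) ∈ S.r i) := by
    ext z
    simp only [Set.mem_setOf_eq, Finset.coe_filter, Finset.mem_univ, true_and]
    exact ⟨fun h => h.1, fun h => ⟨h, S.mem_star'.mpr h⟩⟩
  rw [hset, Set.ncard_coe_finset] at h
  exact h

lemma val_pos (i : Fin (d + 1)) : 0 < S.val i := by
  obtain ⟨⟨a, b⟩, hab⟩ := S.r_nonempty i
  rw [← S.card_out i a]
  exact Finset.card_pos.mpr ⟨b, by simp [hab]⟩

lemma exists_out (i : Fin (d + 1)) (x : X) : ∃ z, (x, z) ∈ S.r i := by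
  have := S.val_pos i
  rw [← S.card_out i x] at this
  obtain ⟨z, hz⟩ := Finset.card_pos.mp this
  exact ⟨z, (Finset.mem_filter.mp hz).2⟩

lemma exists_in (i : Fin (d + 1)) (y : X) : ∃ z, (z, y) ∈ S.r i := by
  obtain ⟨z, hz⟩ := S.exists_out (S.star i) y
  exact ⟨z, S.mem_star'.mp hz⟩

lemma val_star (i : Fin (d + 1)) : S.val (S.star i) = S.val i := by
  have hout : ∀ x : X, (∑ z : X, if (x, z) ∈ S.r i then 1 else 0) = S.val i := by
    intro x
    rw [← S.card_out i x, Finset.card_filter]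
  have hin : ∀ z : X, (∑ x : X, if (x, z) ∈ S.r i then 1 else 0) = S.val (S.star i) := by
    intro z
    rw [← S.card_out (S.star i) z, Finset.card_filter]
    exact Finset.sum_congr rfl fun x _ => by
      by_cases h : (x, z) ∈ S.r i
      · rw [if_pos h, if_pos (S.mem_star'.mpr h)]
      · rw [if_neg h, if_neg fun hc => h (S.mem_star'.mp hc)]
  have hdc : (Fintype.card X) * S.val i = (Fintype.card X) * S.val (S.star i) := by
    calc (Fintype.card X) * S.val i = ∑ _x : X, S.val i := by
          rw [Finset.sum_const, Finset.card_univ, smul_eq_mul]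
      _ = ∑ x : X, ∑ z : X, (if (x, z) ∈ S.r i then 1 else 0) :=
          Finset.sum_congr rfl fun x _ => (hout x).symm
      _ = ∑ z : X, ∑ x : X, (if (x, z) ∈ S.r i then 1 else 0) := Finset.sum_comm
      _ = ∑ _z : X, S.val (S.star i) := Finset.sum_congr rfl fun z _ => hin z
      _ = (Fintype.card X) * S.val (S.star i) := by
          rw [Finset.sum_const, Finset.card_univ, smul_eq_mul]
  exact (Nat.eq_of_mul_eq_mul_left Fintype.card_pos hdc).symm

lemma out_unique {i : Fin (d + 1)} (h : S.val i = 1) {x z1 z2 : X}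
    (h1 : (x, z1) ∈ S.r i) (h2 : (x, z2) ∈ S.r i) : z1 = z2 := by
  have hc := S.card_out i x
  rw [h] at hc
  obtain ⟨z, hz⟩ := Finset.card_eq_one.mp hc
  have e1 : z1 ∈ Finset.univ.filter fun w => (x, w) ∈ S.r i := by simp [h1]
  have e2 : z2 ∈ Finset.univ.filter fun w => (x, w) ∈ S.r i := by simp [h2]
  rw [hz, Finset.mem_singleton] at e1 e2
  rw [e1, e2]

lemma val_zero : S.val 0 = 1 := by
  have x := Classical.arbitrary X
  have hc := S.card_out 0 x
  rw [← hc]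
  rw [Finset.card_eq_one]
  refine ⟨x, ?_⟩
  ext z
  simp only [Finset.mem_filter, Finset.mem_univ, true_and, Finset.mem_singleton]
  rw [S.mem_r_zero_iff]
  exact eq_comm

end Basic

end AssocScheme

namespace AssocScheme

variable {X : Type*} [Fintype X] [Nonempty X] {d : ℕ} (S : AssocScheme X d)

section Subsets

lemma mem_cmul {U V : Set (Fin (d + 1))} {k : Fin (d + 1)} :
    k ∈ S.cmul U V ↔ ∃ u ∈ U, ∃ v ∈ V, 0 < S.pNum u v k := Iff.rfl

lemma cmul_mono {U V U' V' : Set (Fin (d + 1))} (hU : U ⊆ U') (hV : V ⊆ V') :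
    S.cmul U V ⊆ S.cmul U' V' := by
  rintro k ⟨u, hu, v, hv, hp⟩
  exact ⟨u, hU hu, v, hV hv, hp⟩

lemma zero_mem_closed {C : Set (Fin (d + 1))} (hC : S.IsClosedSubset C) : 0 ∈ C := by
  obtain ⟨⟨t, ht⟩, hcl⟩ := hC
  obtain ⟨⟨a, b⟩, hab⟩ := S.r_nonempty t
  refine hcl ⟨S.star t, ⟨t, ht, rfl⟩, t, ht, ?_⟩
  exact S.pos_of_path (S.mem_star'.mpr hab) hab (S.mem_diag b)

lemma star_mem_closed {C : Set (Fin (d + 1))} (hC : S.IsClosedSubset C)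
    {t : Fin (d + 1)} (ht : t ∈ C) : S.star t ∈ C := by
  obtain ⟨⟨a, b⟩, hab⟩ := S.r_nonempty (S.star t)
  refine hC.2 ⟨S.star t, ⟨t, ht, rfl⟩, 0, S.zero_mem_closed hC, ?_⟩
  exact S.pos_of_path hab (S.mem_diag b) hab

lemma mul_mem_closed {C : Set (Fin (d + 1))} (hC : S.IsClosedSubset C)
    {t₁ t₂ k : Fin (d + 1)} (h₁ : t₁ ∈ C) (h₂ : t₂ ∈ C) (hp : 0 < S.pNum t₁ t₂ k) :
    k ∈ C := by
  refine hC.2 ⟨t₁, ⟨S.star t₁, S.star_mem_closed hC h₁, S.star_star t₁⟩, t₂, h₂, hp⟩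

lemma univ_stronglyNormal : S.IsStronglyNormal (Set.univ) :=
  ⟨⟨⟨0, trivial⟩, fun _ _ => trivial⟩, fun _ _ _ => trivial⟩

lemma zero_mem_thinResidue : (0 : Fin (d + 1)) ∈ S.thinResidue := by
  intro C hC
  exact S.zero_mem_closed hC.1

lemma thinResidue_closed : S.IsClosedSubset S.thinResidue := by
  constructor
  · exact ⟨0, S.zero_mem_thinResidue⟩
  · rintro k ⟨u, ⟨u', hu', rfl⟩, v, hv, hp⟩
    intro C hC
    exact S.mul_mem_closed hC.1 (S.star_mem_closed hC.1 (hu' C hC)) (hv C hC) hp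

lemma thinResidue_stronglyNormal : S.IsStronglyNormal S.thinResidue := by
  refine ⟨S.thinResidue_closed, fun i k hk => ?_⟩
  intro C hC
  refine hC.2 i (S.cmul_mono (S.cmul_mono (le_refl _) (fun t ht => Set.mem_sInter.mp ht C hC)) (le_refl _) hk)

lemma mul_mem_thinResidue {t₁ t₂ k : Fin (d + 1)} (h₁ : t₁ ∈ S.thinResidue)
    (h₂ : t₂ ∈ S.thinResidue) (hp : 0 < S.pNum t₁ t₂ k) : k ∈ S.thinResidue :=
  S.mul_mem_closed S.thinResidue_closed h₁ h₂ hp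

/-- `i* i ⊆ O^ϑ(S)`, pointwise form. -/
lemma idx_mem_thinResidue_of_fork {i : Fin (d + 1)} {x z₁ z₂ : X}
    (h₁ : (x, z₁) ∈ S.r i) (h₂ : (x, z₂) ∈ S.r i) : S.idx z₁ z₂ ∈ S.thinResidue := by
  intro C hC
  have hp : 0 < S.pNum (S.star i) i (S.idx z₁ z₂) :=
    S.pos_of_path (S.mem_star'.mpr h₁) h₂ (S.mem_idx z₁ z₂)
  have hsi : S.star i ∈ S.cmul {S.star i} C := by
    obtain ⟨⟨a, b⟩, hab⟩ := S.r_nonempty (S.star i)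
    exact ⟨S.star i, rfl, 0, S.zero_mem_closed hC.1,
      S.pos_of_path hab (S.mem_diag b) hab⟩
  exact hC.2 i ⟨S.star i, hsi, i, rfl, hp⟩

/-- Conjugation stability of the thin residue, pointwise form:
if `u ∈ O^ϑ(S)` and `x →q* a →u b →q y` then `idx x y ∈ O^ϑ(S)`. -/
lemma idx_conj_mem_thinResidue {u q : Fin (d + 1)} (hu : u ∈ S.thinResidue)
    {x a b y : X} (h₁ : (x, a) ∈ S.r (S.star q)) (h₂ : (a, b) ∈ S.r u)
    (h₃ : (b, y) ∈ S.r q) : S.idx x y ∈ S.thinResidue := by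
  intro C hC
  have hw : S.idx x b ∈ S.cmul {S.star q} C :=
    ⟨S.star q, rfl, u, hu C hC, S.pos_of_path h₁ h₂ (S.mem_idx x b)⟩
  exact hC.2 q ⟨S.idx x b, hw, q, rfl, S.pos_of_path (S.mem_idx x b) h₃ (S.mem_idx x y)⟩

end Subsets

end AssocScheme

namespace AssocScheme

variable {X : Type*} [Fintype X] [Nonempty X] {d : ℕ} (S : AssocScheme X d)

section Conn

/-- Generator for the point equivalence: common in-neighbor under the same relation,
or joined by a thin relation. -/
def nbrRel (z₁ z₂ : X) : Prop :=
  (∃ (x : X) (s : Fin (d + 1)), (x, z₁) ∈ S.r s ∧ (x, z₂) ∈ S.r s) ∨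
  (∃ g : Fin (d + 1), S.val g = 1 ∧ (z₁, z₂) ∈ S.r g)

/-- The equivalence generated by `nbrRel`. -/
def conn : X → X → Prop := Relation.EqvGen S.nbrRel

lemma conn_refl (x : X) : S.conn x x := Relation.EqvGen.refl x

lemma conn_symm {x y : X} (h : S.conn x y) : S.conn y x := Relation.EqvGen.symm _ _ h

lemma conn_trans {x y z : X} (h₁ : S.conn x y) (h₂ : S.conn y z) : S.conn x z :=
  Relation.EqvGen.trans _ _ _ h₁ h₂

lemma conn_of_fork {s : Fin (d + 1)} {x z₁ z₂ : X} (h₁ : (x, z₁) ∈ S.r s)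
    (h₂ : (x, z₂) ∈ S.r s) : S.conn z₁ z₂ :=
  Relation.EqvGen.rel _ _ (Or.inl ⟨x, s, h₁, h₂⟩)

lemma conn_of_thin {g : Fin (d + 1)} (hg : S.val g = 1) {x y : X}
    (h : (x, y) ∈ S.r g) : S.conn x y :=
  Relation.EqvGen.rel _ _ (Or.inr ⟨g, hg, h⟩)

/-- `D`: relations all of whose pairs are `conn`-related. -/
def Dset : Set (Fin (d + 1)) := {v | ∀ x y : X, (x, y) ∈ S.r v → S.conn x y}

/-- `D'`: relations all of whose conjugates lie in `D`, pointwise form. -/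
def Dset' : Set (Fin (d + 1)) :=
  {v | ∀ (q : Fin (d + 1)) (x a b y : X), (x, a) ∈ S.r (S.star q) → (a, b) ∈ S.r v →
    (b, y) ∈ S.r q → S.conn x y}

lemma Dset'_subset_Dset : S.Dset' ⊆ S.Dset := by
  intro v hv x y hxy
  have h0 : (x, x) ∈ S.r (S.star 0) := by rw [S.star_zero]; exact S.mem_diag x
  exact hv 0 x x y y h0 hxy (S.mem_diag y)

lemma zero_mem_Dset' : (0 : Fin (d + 1)) ∈ S.Dset' := by
  intro q x a b y h₁ h₂ h₃
  have hab : a = b := (S.mem_r_zero_iff a b).mp h₂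
  subst hab
  exact S.conn_of_fork (S.mem_star'.mp h₁) h₃

lemma Dset'_closed : S.IsClosedSubset S.Dset' := by
  refine ⟨⟨0, S.zero_mem_Dset'⟩, ?_⟩
  rintro v ⟨u, ⟨a', ha', rfl⟩, b', hb', hp⟩
  intro q x m m' y h₁ h₂ h₃
  obtain ⟨z, hz₁, hz₂⟩ := S.path_of_pos hp h₂
  -- hz₁ : (m, z) ∈ r (star a'), hz₂ : (z, m') ∈ r b'
  obtain ⟨w, hw⟩ := S.exists_in (S.star q) z
  have hwy : S.conn w y := hb' q w z m' y hw hz₂ h₃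
  have hwx : S.conn w x := ha' q w z m x hw (S.mem_star'.mp hz₁) (S.mem_star'.mp h₁)
  exact S.conn_trans (S.conn_symm hwx) hwy

lemma Dset'_stronglyNormal : S.IsStronglyNormal S.Dset' := by
  refine ⟨S.Dset'_closed, fun i => ?_⟩
  rintro v ⟨w', ⟨si, hsi, t, ht, hp₁⟩, i', hi', hp₂⟩
  rw [Set.mem_singleton_iff] at hsi hi'
  rw [hsi] at hp₁; rw [hi'] at hp₂
  clear hsi hi'
  intro q x a b y h₁ h₂ h₃
  -- expand v at (a, b)
  obtain ⟨dd, hd₁, hd₂⟩ := S.path_of_pos hp₂ h₂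
  obtain ⟨c, hc₁, hc₂⟩ := S.path_of_pos hp₁ hd₁
  -- hc₁ : (a,c) ∈ r (star i), hc₂ : (c,dd) ∈ r t, hd₂ : (dd,b) ∈ r i
  set m' := S.idx dd y with hm'
  have hm'mem : (dd, y) ∈ S.r m' := S.mem_idx dd y
  have hpm' : 0 < S.pNum i q m' := S.pos_of_path hd₂ h₃ hm'mem
  set m := S.idx c x with hm
  have hmmem : (c, x) ∈ S.r m := S.mem_idx c x
  have hpm : 0 < S.pNum i q m :=
    S.pos_of_path (S.mem_star'.mp hc₁) (S.mem_star'.mp h₁) hmmem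
  -- expand m at (c, x)
  obtain ⟨e, he₁, he₂⟩ := S.path_of_pos hpm hmmem
  -- he₁ : (c,e) ∈ r i, he₂ : (e,x) ∈ r q
  -- from p_{iq}^{m'} > 0 : 0 < p_{m', star q}^{i}
  have hpi : 0 < S.pNum m' (S.star q) i := S.pos_shift_right hpm'
  obtain ⟨h', hh₁, hh₂⟩ := S.path_of_pos hpi he₁
  -- hh₁ : (c,h') ∈ r m', hh₂ : (h',e) ∈ r (star q)
  have hhx : S.conn h' x := S.conn_of_fork (S.mem_star'.mp hh₂) he₂
  have hhy : S.conn h' y := ht m' h' c dd y (S.mem_star'.mpr hh₁) hc₂ hm'mem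
  exact S.conn_trans (S.conn_symm hhx) hhy

lemma thinResidue_subset_Dset' : S.thinResidue ⊆ S.Dset' := fun u hu =>
  Set.mem_sInter.mp hu S.Dset' S.Dset'_stronglyNormal

lemma conn_of_thinResidue {u : Fin (d + 1)} (hu : u ∈ S.thinResidue) {x y : X}
    (h : (x, y) ∈ S.r u) : S.conn x y :=
  S.Dset'_subset_Dset (S.thinResidue_subset_Dset' hu) x y h

end Conn

end AssocScheme

namespace AssocScheme

variable {X : Type*} [Fintype X] [Nonempty X] {d : ℕ} (S : AssocScheme X d)
variable (𝔽 : Type*) [Field 𝔽]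

section MatrixLemmas

/-- The all-ones matrix. -/
noncomputable def onesMat : Matrix X X 𝔽 := Matrix.of fun _ _ => 1

lemma onesMat_apply (x y : X) : (onesMat (X := X) 𝔽) x y = 1 := rfl

lemma adj_apply (i : Fin (d + 1)) (x y : X) :
    S.adj 𝔽 i x y = if (x, y) ∈ S.r i then 1 else 0 := rfl

lemma adj_mul_apply (i : Fin (d + 1)) (v : Matrix X X 𝔽) (x y : X) :
    (S.adj 𝔽 i * v) x y = ∑ z ∈ Finset.univ.filter (fun z => (x, z) ∈ S.r i), v z y := by
  rw [Matrix.mul_apply, Finset.sum_filter]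
  refine Finset.sum_congr rfl fun z _ => ?_
  rw [adj_apply]
  by_cases h : (x, z) ∈ S.r i
  · rw [if_pos h, if_pos h, one_mul]
  · rw [if_neg h, if_neg h, zero_mul]

lemma filter_rel_eq (x y : X) :
    Finset.univ.filter (fun j => (x, y) ∈ S.r j) = {S.idx x y} := by
  ext j
  simp only [Finset.mem_filter, Finset.mem_univ, true_and, Finset.mem_singleton]
  constructor
  · intro h; exact (S.idx_eq h).symm
  · rintro rfl; exact S.mem_idx x y

lemma sum_smul_adj_apply (c : Fin (d + 1) → 𝔽) (x y : X) :
    (∑ j, c j • S.adj 𝔽 j) x y = c (S.idx x y) := by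
  rw [Matrix.sum_apply]
  have : ∀ j, (c j • S.adj 𝔽 j) x y = if (x, y) ∈ S.r j then c j else 0 := by
    intro j
    rw [Matrix.smul_apply, adj_apply]
    by_cases h : (x, y) ∈ S.r j
    · rw [if_pos h, if_pos h, smul_eq_mul, mul_one]
    · rw [if_neg h, if_neg h, smul_eq_mul, mul_zero]
  rw [Finset.sum_congr rfl fun j _ => this j, ← Finset.sum_filter, S.filter_rel_eq,
    Finset.sum_singleton]

lemma sum_adj_eq_onesMat : (∑ j, S.adj 𝔽 j) = onesMat (X := X) 𝔽 := by
  have h : ∀ j : Fin (d + 1), S.adj 𝔽 j = (fun _ : Fin (d + 1) => (1 : 𝔽)) j • S.adj 𝔽 j :=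
    fun j => (one_smul _ _).symm
  ext x y
  rw [Finset.sum_congr rfl fun j _ => h j, S.sum_smul_adj_apply]
  rfl

lemma onesMat_trivial : S.IsTrivialVector 𝔽 (onesMat (X := X) 𝔽) := by
  refine ⟨?_, ?_, ?_⟩
  · intro h
    have h1 : (onesMat (X := X) 𝔽) (Classical.arbitrary X) (Classical.arbitrary X) = 0 := by
      rw [h]; rfl
    rw [onesMat_apply] at h1
    exact one_ne_zero h1
  · rw [← S.sum_adj_eq_onesMat]
    exact Submodule.sum_mem _ fun j _ => Submodule.subset_span ⟨j, rfl⟩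
  · intro i
    ext x y
    rw [S.adj_mul_apply, Matrix.smul_apply, onesMat_apply, smul_eq_mul, mul_one]
    have : ∀ z ∈ Finset.univ.filter (fun z => (x, z) ∈ S.r i),
        (onesMat (X := X) 𝔽) z y = 1 := fun z _ => rfl
    rw [Finset.sum_congr rfl this, Finset.sum_const, S.card_out, nsmul_eq_mul, mul_one]

lemma trivial_coeffs {v : Matrix X X 𝔽} (hv : S.IsTrivialVector 𝔽 v) :
    ∃ c : Fin (d + 1) → 𝔽, (∀ x y : X, v x y = c (S.idx x y)) ∧ v = ∑ j, c j • S.adj 𝔽 j := by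
  obtain ⟨c, hc⟩ := Submodule.mem_span_range_iff_exists_fun 𝔽 |>.mp hv.2.1
  exact ⟨c, fun x y => by rw [← hc, S.sum_smul_adj_apply], hc.symm⟩

lemma isPTransitive_of_flat
    (hflat : ∀ v : Matrix X X 𝔽, S.IsTrivialVector 𝔽 v →
      ∃ c : 𝔽, c ≠ 0 ∧ v = c • onesMat (X := X) 𝔽) : S.IsPTransitive 𝔽 := by
  refine ⟨Submodule.span 𝔽 {onesMat (X := X) 𝔽},
    ⟨onesMat (X := X) 𝔽, S.onesMat_trivial 𝔽, rfl⟩, ?_⟩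
  rintro W ⟨v, hv, rfl⟩
  obtain ⟨c, hc, rfl⟩ := hflat v hv
  exact Submodule.span_singleton_smul_eq (isUnit_iff_ne_zero.mpr hc) _

lemma flat_of_odd (hqt : ∀ i : Fin (d + 1), S.val i ≤ 2) (h2 : (2 : 𝔽) ≠ 0) :
    ∀ v : Matrix X X 𝔽, S.IsTrivialVector 𝔽 v →
      ∃ c : 𝔽, c ≠ 0 ∧ v = c • onesMat (X := X) 𝔽 := by
  intro v hv
  obtain ⟨c, hcv, hsum⟩ := S.trivial_coeffs 𝔽 hv
  set o := Classical.arbitrary X with ho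
  have hval : ∀ i : Fin (d + 1), (S.val i : 𝔽) ≠ 0 := by
    intro i
    have h1 := S.val_pos i
    have h2' := hqt i
    have : S.val i = 1 ∨ S.val i = 2 := by omega
    rcases this with h | h <;> rw [h]
    · norm_num
    · exact_mod_cast h2
  have key : ∀ i : Fin (d + 1), c (S.star i) = c 0 := by
    intro i
    have heq := congrFun (congrFun (hv.2.2 i) o) o
    rw [S.adj_mul_apply] at heq
    have hL : ∀ z ∈ Finset.univ.filter (fun z => (o, z) ∈ S.r i),
        v z o = c (S.star i) := by
      intro z hz
      rw [hcv z o, S.idx_eq (S.mem_star'.mpr (Finset.mem_filter.mp hz).2)]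
    rw [Finset.sum_congr rfl hL, Finset.sum_const, S.card_out, nsmul_eq_mul] at heq
    rw [Matrix.smul_apply, smul_eq_mul, hcv o o, S.idx_eq (S.mem_diag o)] at heq
    exact mul_left_cancel₀ (hval i) heq
  have hall : ∀ j : Fin (d + 1), c j = c 0 := by
    intro j
    have := key (S.star j)
    rwa [S.star_star] at this
  refine ⟨c 0, ?_, ?_⟩
  · intro hc0
    apply hv.1
    ext x y
    rw [hcv x y, hall _, hc0]
    rfl
  · ext x y
    rw [hcv x y, hall _, Matrix.smul_apply, onesMat_apply, smul_eq_mul, mul_one]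

end MatrixLemmas

end AssocScheme

namespace AssocScheme

variable {X : Type*} [Fintype X] [Nonempty X] {d : ℕ} (S : AssocScheme X d)
variable (𝔽 : Type*) [Field 𝔽]

section CharTwo

lemma char2_add_eq {F : Type*} [Field F] {a b : F} (h2 : (2 : F) = 0) (h : a + b = 0) :
    a = b := by
  have hbb : b + b = 0 := by rw [← two_mul, h2, zero_mul]
  rw [eq_neg_of_add_eq_zero_left h, neg_eq_of_add_eq_zero_left hbb]

lemma conn_apply_eq (h2 : (2 : 𝔽) = 0) (hqt : ∀ i : Fin (d + 1), S.val i ≤ 2)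
    {v : Matrix X X 𝔽} (hv : S.IsTrivialVector 𝔽 v) (o : X) {x y : X}
    (h : S.conn x y) : v x o = v y o := by
  induction h with
  | rel a b hab =>
    rcases hab with ⟨w, s, h1, h1'⟩ | ⟨g, hg, hab⟩
    · have hv12 : S.val s = 1 ∨ S.val s = 2 := by
        have := S.val_pos s; have := hqt s; omega
      rcases hv12 with hvs | hvs
      · rw [S.out_unique hvs h1 h1']
      · have heq := congrFun (congrFun (hv.2.2 s) w) o
        rw [S.adj_mul_apply] at heq
        have hcard : (Finset.univ.filter (fun z => (w, z) ∈ S.r s)).card = 2 := by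
          rw [S.card_out, hvs]
        obtain ⟨z₁, z₂, hne, hpr⟩ := Finset.card_eq_two.mp hcard
        rw [hpr, Finset.sum_pair hne, Matrix.smul_apply, hvs] at heq
        have hcast : ((2 : ℕ) : 𝔽) = 0 := by exact_mod_cast h2
        rw [hcast, zero_smul] at heq
        have hz : v z₁ o = v z₂ o := char2_add_eq h2 heq
        have ha : a ∈ ({z₁, z₂} : Finset X) := by
          rw [← hpr]; exact Finset.mem_filter.mpr ⟨Finset.mem_univ a, h1⟩
        have hb : b ∈ ({z₁, z₂} : Finset X) := by
          rw [← hpr]; exact Finset.mem_filter.mpr ⟨Finset.mem_univ b, h1'⟩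
        rw [Finset.mem_insert, Finset.mem_singleton] at ha hb
        rcases ha with rfl | rfl <;> rcases hb with rfl | rfl
        · rfl
        · exact hz
        · exact hz.symm
        · rfl
    · have heq := congrFun (congrFun (hv.2.2 g) a) o
      rw [S.adj_mul_apply] at heq
      have hfil : Finset.univ.filter (fun z => (a, z) ∈ S.r g) = {b} := by
        refine Finset.eq_singleton_iff_unique_mem.mpr
          ⟨Finset.mem_filter.mpr ⟨Finset.mem_univ b, hab⟩, fun y' hy' =>
            S.out_unique hg (Finset.mem_filter.mp hy').2 hab⟩
      rw [hfil, Finset.sum_singleton, Matrix.smul_apply, hg, Nat.cast_one, one_smul] at heq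
      exact heq.symm
  | refl a => rfl
  | symm a b _ ih => exact ih.symm
  | trans a b c _ _ ih₁ ih₂ => exact ih₁.trans ih₂

lemma flat_of_two (h2 : (2 : 𝔽) = 0) (hqt : ∀ i : Fin (d + 1), S.val i ≤ 2)
    (hT : S.cmul S.thinResidue S.thinRadical = Set.univ) :
    ∀ v : Matrix X X 𝔽, S.IsTrivialVector 𝔽 v →
      ∃ c : 𝔽, c ≠ 0 ∧ v = c • onesMat (X := X) 𝔽 := by
  intro v hv
  obtain ⟨c, hcv, hsum⟩ := S.trivial_coeffs 𝔽 hv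
  have o : X := Classical.arbitrary X
  have hconn : ∀ x : X, v x o = v o o := by
    intro x
    have hmem : S.idx x o ∈ S.cmul S.thinResidue S.thinRadical := by
      rw [hT]; trivial
    obtain ⟨u, hu, g, hg, hp⟩ := hmem
    obtain ⟨m, hm₁, hm₂⟩ := S.path_of_pos hp (S.mem_idx x o)
    have h₁ : S.conn x m := S.conn_of_thinResidue hu hm₁
    have h₂ : S.conn m o := S.conn_of_thin hg hm₂
    exact S.conn_apply_eq 𝔽 h2 hqt hv o (S.conn_trans h₁ h₂)
  have hall : ∀ j : Fin (d + 1), c j = c 0 := by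
    intro j
    obtain ⟨x, hx⟩ := S.exists_in j o
    have h1 : v x o = c j := by rw [hcv x o, S.idx_eq hx]
    have h2' : v o o = c 0 := by rw [hcv o o, S.idx_eq (S.mem_diag o)]
    rw [← h1, ← h2']
    exact hconn x
  refine ⟨c 0, ?_, ?_⟩
  · intro hc0
    apply hv.1
    ext x y
    rw [hcv x y, hall _, hc0]
    rfl
  · ext x y
    rw [hcv x y, hall _, Matrix.smul_apply, onesMat_apply, smul_eq_mul, mul_one]

lemma zero_mem_T : (0 : Fin (d + 1)) ∈ S.cmul S.thinResidue S.thinRadical := by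
  refine ⟨0, S.zero_mem_thinResidue, 0, S.val_zero, ?_⟩
  have o : X := Classical.arbitrary X
  exact S.pos_of_path (S.mem_diag o) (S.mem_diag o) (S.mem_diag o)

/-- Transfer of membership in `T = O^ϑ O_ϑ` backwards along a thin relation. -/
lemma T_shift_thin {g : Fin (d + 1)} (hg : S.val g = 1) {x z y : X}
    (hxz : (x, z) ∈ S.r g) (h : S.idx z y ∈ S.cmul S.thinResidue S.thinRadical) :
    S.idx x y ∈ S.cmul S.thinResidue S.thinRadical := by
  obtain ⟨u, hu, hh, hhG, hp⟩ := h
  obtain ⟨m, hm₁, hm₂⟩ := S.path_of_pos hp (S.mem_idx z y)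
  obtain ⟨n, hn⟩ := S.exists_in g m
  have hθ : S.idx x n ∈ S.thinResidue := by
    refine S.idx_conj_mem_thinResidue hu (q := S.star g) ?_ hm₁ (S.mem_star'.mpr hn)
    rw [S.star_star]; exact hxz
  have hh' : S.val (S.idx n y) = 1 := by
    have hp' : 0 < S.pNum g hh (S.idx n y) := S.pos_of_path hn hm₂ (S.mem_idx n y)
    rw [← S.card_out (S.idx n y) n]
    refine Finset.card_eq_one.mpr ⟨y, ?_⟩
    refine Finset.eq_singleton_iff_unique_mem.mpr
      ⟨Finset.mem_filter.mpr ⟨Finset.mem_univ y, S.mem_idx n y⟩, fun y' hy' => ?_⟩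
    obtain ⟨m', hm'₁, hm'₂⟩ := S.path_of_pos hp' (Finset.mem_filter.mp hy').2
    have : m' = m := S.out_unique hg hm'₁ hn
    subst this
    exact S.out_unique hhG hm'₂ hm₂
  exact ⟨S.idx x n, hθ, S.idx n y, hh',
    S.pos_of_path (S.mem_idx x n) (S.mem_idx n y) (S.mem_idx x y)⟩

/-- Transfer of membership in `T` between the two out-neighbors of a valency-2 relation. -/
lemma T_shift_fork {i : Fin (d + 1)} {x z₁ z₂ y : X} (h₁ : (x, z₁) ∈ S.r i)
    (h₂ : (x, z₂) ∈ S.r i) (h : S.idx z₁ y ∈ S.cmul S.thinResidue S.thinRadical) :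
    S.idx z₂ y ∈ S.cmul S.thinResidue S.thinRadical := by
  obtain ⟨u, hu, g, hg, hp⟩ := h
  obtain ⟨m, hm₁, hm₂⟩ := S.path_of_pos hp (S.mem_idx z₁ y)
  have hθ : S.idx z₂ z₁ ∈ S.thinResidue := S.idx_mem_thinResidue_of_fork h₂ h₁
  have hu' : S.idx z₂ m ∈ S.thinResidue :=
    S.mul_mem_thinResidue hθ hu (S.pos_of_path (S.mem_idx z₂ z₁) hm₁ (S.mem_idx z₂ m))
  exact ⟨S.idx z₂ m, hu', g, hg,
    S.pos_of_path (S.mem_idx z₂ m) hm₂ (S.mem_idx z₂ y)⟩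

/-- The indicator vector of `T = O^ϑ O_ϑ` is a trivial vector in characteristic 2. -/
lemma indicator_trivial (h2 : (2 : 𝔽) = 0) (hqt : ∀ i : Fin (d + 1), S.val i ≤ 2) :
    S.IsTrivialVector 𝔽
      (∑ j, (if j ∈ S.cmul S.thinResidue S.thinRadical then (1 : 𝔽) else 0) • S.adj 𝔽 j) := by
  set cT : Fin (d + 1) → 𝔽 :=
    fun j => if j ∈ S.cmul S.thinResidue S.thinRadical then (1 : 𝔽) else 0 with hcT
  have happ : ∀ x y : X, (∑ j, cT j • S.adj 𝔽 j) x y = cT (S.idx x y) :=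
    fun x y => S.sum_smul_adj_apply 𝔽 cT x y
  have hind : ∀ x z y : X, (S.idx z y ∈ S.cmul S.thinResidue S.thinRadical ↔
      S.idx x y ∈ S.cmul S.thinResidue S.thinRadical) → cT (S.idx z y) = cT (S.idx x y) := by
    intro x z y hiff
    simp only [hcT]
    by_cases h : S.idx z y ∈ S.cmul S.thinResidue S.thinRadical
    · rw [if_pos h, if_pos (hiff.mp h)]
    · rw [if_neg h, if_neg (fun hc => h (hiff.mpr hc))]
  refine ⟨?_, ?_, ?_⟩
  · intro h
    have o : X := Classical.arbitrary X
    have h1 : (∑ j, cT j • S.adj 𝔽 j) o o = 0 := by rw [h]; rfl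
    rw [happ o o, S.idx_eq (S.mem_diag o)] at h1
    simp only [hcT] at h1
    rw [if_pos S.zero_mem_T] at h1
    exact one_ne_zero h1
  · exact Submodule.sum_mem _ fun j _ => Submodule.smul_mem _ _
      (Submodule.subset_span ⟨j, rfl⟩)
  · intro i
    ext x y
    rw [S.adj_mul_apply, Matrix.smul_apply, happ x y]
    have hv12 : S.val i = 1 ∨ S.val i = 2 := by
      have := S.val_pos i; have := hqt i; omega
    rcases hv12 with hvs | hvs
    · -- single out-neighbor
      obtain ⟨z, hz⟩ := S.exists_out i x
      have hfil : Finset.univ.filter (fun w => (x, w) ∈ S.r i) = {z} := by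
        refine Finset.eq_singleton_iff_unique_mem.mpr
          ⟨Finset.mem_filter.mpr ⟨Finset.mem_univ z, hz⟩, fun y' hy' =>
            S.out_unique hvs (Finset.mem_filter.mp hy').2 hz⟩
      rw [hfil, Finset.sum_singleton, happ z y, hvs, Nat.cast_one, one_smul]
      refine hind x z y ⟨fun h => ?_, fun h => ?_⟩
      · exact S.T_shift_thin hvs hz h
      · -- backwards: use the thin relation star i
        have hgs : S.val (S.star i) = 1 := by rw [S.val_star, hvs]
        have := S.T_shift_thin hgs (S.mem_star'.mpr hz) h
        exact this
    · -- two out-neighbors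
      have hcard : (Finset.univ.filter (fun w => (x, w) ∈ S.r i)).card = 2 := by
        rw [S.card_out, hvs]
      obtain ⟨z₁, z₂, hne, hpr⟩ := Finset.card_eq_two.mp hcard
      have hz₁ : (x, z₁) ∈ S.r i := by
        have : z₁ ∈ Finset.univ.filter (fun w => (x, w) ∈ S.r i) := by
          rw [hpr]; exact Finset.mem_insert_self _ _
        exact (Finset.mem_filter.mp this).2
      have hz₂ : (x, z₂) ∈ S.r i := by
        have : z₂ ∈ Finset.univ.filter (fun w => (x, w) ∈ S.r i) := by
          rw [hpr]; exact Finset.mem_insert_of_mem (Finset.mem_singleton_self _)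
        exact (Finset.mem_filter.mp this).2
      rw [hpr, Finset.sum_pair hne, happ z₁ y, happ z₂ y]
      have hzz : cT (S.idx z₁ y) = cT (S.idx z₂ y) :=
        hind z₂ z₁ y ⟨fun h => S.T_shift_fork hz₁ hz₂ h, fun h => S.T_shift_fork hz₂ hz₁ h⟩
      rw [hzz, hvs]
      have hcast : ((2 : ℕ) : 𝔽) = 0 := by exact_mod_cast h2
      rw [hcast, zero_smul, ← two_mul, h2, zero_mul]

lemma not_pTransitive_of_two (h2 : (2 : 𝔽) = 0) (hqt : ∀ i : Fin (d + 1), S.val i ≤ 2)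
    (hT : S.cmul S.thinResidue S.thinRadical ≠ Set.univ) : ¬ S.IsPTransitive 𝔽 := by
  rintro ⟨W, _, huniq⟩
  set cT : Fin (d + 1) → 𝔽 :=
    fun j => if j ∈ S.cmul S.thinResidue S.thinRadical then (1 : 𝔽) else 0 with hcT
  set vT : Matrix X X 𝔽 := ∑ j, cT j • S.adj 𝔽 j with hvT
  have hvTtriv : S.IsTrivialVector 𝔽 vT := S.indicator_trivial 𝔽 h2 hqt
  have h₁ := huniq (Submodule.span 𝔽 {onesMat (X := X) 𝔽})
    ⟨onesMat (X := X) 𝔽, S.onesMat_trivial 𝔽, rfl⟩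
  have h₂ := huniq (Submodule.span 𝔽 {vT}) ⟨vT, hvTtriv, rfl⟩
  have hspan : Submodule.span 𝔽 {vT} = Submodule.span 𝔽 {onesMat (X := X) 𝔽} := by
    rw [h₁, h₂]
  have hmem : vT ∈ Submodule.span 𝔽 ({onesMat (X := X) 𝔽} : Set (Matrix X X 𝔽)) := by
    rw [← hspan]; exact Submodule.subset_span rfl
  obtain ⟨a, ha⟩ := Submodule.mem_span_singleton.mp hmem
  -- evaluate at the diagonal : a = 1
  have o : X := Classical.arbitrary X
  have happ : ∀ x y : X, vT x y = cT (S.idx x y) := fun x y => S.sum_smul_adj_apply 𝔽 cT x y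
  have hdiag : a = 1 := by
    have := congrFun (congrFun ha o) o
    rw [Matrix.smul_apply, onesMat_apply, smul_eq_mul, mul_one, happ o o,
      S.idx_eq (S.mem_diag o)] at this
    simp only [hcT] at this
    rw [if_pos S.zero_mem_T] at this
    exact this
  -- evaluate at a pair outside T : a = 0
  obtain ⟨k, hk⟩ : ∃ k, k ∉ S.cmul S.thinResidue S.thinRadical := by
    by_contra hc
    push_neg at hc
    exact hT (Set.eq_univ_of_forall hc)
  obtain ⟨⟨x, y⟩, hxy⟩ := S.r_nonempty k
  have hzero : a = 0 := by
    have := congrFun (congrFun ha x) y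
    rw [Matrix.smul_apply, onesMat_apply, smul_eq_mul, mul_one, happ x y,
      S.idx_eq hxy] at this
    simp only [hcT] at this
    rw [if_neg hk] at this
    exact this
  rw [hdiag] at hzero
  exact one_ne_zero hzero

end CharTwo

end AssocScheme

/-- **Theorem A.** A quasi-thin scheme `S` is `p`-transitive iff `p > 2`, or `p = 2` and
`S = O^ϑ(S)O_ϑ(S)`. -/
theorem quasiThin_isPTransitive_iff
    {X : Type*} [Fintype X] [Nonempty X] {d : ℕ} (S : AssocScheme X d)
    (𝔽 : Type*) [Field 𝔽] (p : ℕ) [Fact p.Prime] [CharP 𝔽 p]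
    (hqt : ∀ i : Fin (d + 1), S.val i ≤ 2) :
    S.IsPTransitive 𝔽 ↔
      2 < p ∨ (p = 2 ∧ S.cmul S.thinResidue S.thinRadical = Set.univ) := by
  have hprime : p.Prime := Fact.out
  constructor
  · intro hPT
    by_cases hp2 : 2 < p
    · exact Or.inl hp2
    · have hp : p = 2 := le_antisymm (not_lt.mp hp2) hprime.two_le
      refine Or.inr ⟨hp, ?_⟩
      by_contra hT
      have h2 : (2 : 𝔽) = 0 := by
        have hc := CharP.cast_eq_zero 𝔽 p
        rw [hp] at hc
        exact_mod_cast hc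
      exact S.not_pTransitive_of_two 𝔽 h2 hqt hT hPT
  · rintro (hp | ⟨hp, hT⟩)
    · have h2 : (2 : 𝔽) ≠ 0 := by
        intro hc
        have hdvd : p ∣ 2 := by
          rw [← CharP.cast_eq_zero_iff 𝔽 p 2]
          exact_mod_cast hc
        have := Nat.le_of_dvd (by norm_num) hdvd
        omega
      exact S.isPTransitive_of_flat 𝔽 (S.flat_of_odd 𝔽 hqt h2)
    · have h2 : (2 : 𝔽) = 0 := by
        have hc := CharP.cast_eq_zero 𝔽 p
        rw [hp] at hc
        exact_mod_cast hc
      exact S.isPTransitive_of_flat 𝔽 (S.flat_of_two 𝔽 h2 hqt hT)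
end

section
/- Let ⟨v⟩_𝔽 be a trivial 𝔽S-submodule of the regular 𝔽S-module. Then for every thin relation R_i ∈ O_ϑ(S), the complex product R_i U(v) equals U(v). -/
open scoped Classical

/-- If `⟨v⟩_𝔽` is a trivial `𝔽S`-submodule of the regular `𝔽S`-module, then for every
thin relation `R_i ∈ O_ϑ(S)` the complex product `R_i U(v)` equals `U(v)`. -/
theorem cmul_thin_support_eq
    {X : Type*} [Fintype X] [Nonempty X] {d : ℕ} (S : AssocScheme X d)
    (𝔽 : Type*) [Field 𝔽] (p : ℕ) [Fact p.Prime] [CharP 𝔽 p]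
    (c : Fin (d + 1) → 𝔽) (v : Matrix X X 𝔽)
    (hv : v = ∑ i : Fin (d + 1), c i • S.adj 𝔽 i)
    (htriv : S.IsTrivialVector 𝔽 v) :
    ∀ i ∈ S.thinRadical, S.cmul {i} {j | c j ≠ 0} = {j | c j ≠ 0} := by

  intro i hi
  classical
  have hi' : S.val i = 1 := hi
  -- the relation-index function
  have hrel := S.existsUnique_rel
  set rel : X × X → Fin (d + 1) := fun q => (hrel q).choose with hrel_def
  have hrel_mem : ∀ q, q ∈ S.r (rel q) := fun q => (hrel q).choose_spec.1
  have hrel_eq : ∀ q k, q ∈ S.r k → rel q = k :=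
    fun q k h => ((hrel q).choose_spec.2 k h).symm
  -- each x has a unique i-neighbor
  have hf : ∀ x : X, ∃! z, (x, z) ∈ S.r i := by
    intro x
    have h0 : ((x, x) : X × X) ∈ S.r 0 := by rw [S.r_zero]; simp
    have hcard := S.ncard_eq i (S.star i) 0 (x, x) h0
    have hset : {z : X | ((x, x).1, z) ∈ S.r i ∧ (z, (x, x).2) ∈ S.r (S.star i)} =
        {z : X | (x, z) ∈ S.r i} := by
      ext z; simp [S.mem_star]
    rw [hset] at hcard
    have h1 : ({z : X | (x, z) ∈ S.r i}).ncard = 1 := by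
      rw [hcard]; exact hi'
    obtain ⟨a, ha⟩ := Set.ncard_eq_one.mp h1
    refine ⟨a, ?_, ?_⟩
    · have : a ∈ {z : X | (x, z) ∈ S.r i} := by rw [ha]; rfl
      exact this
    · intro z hz
      have : z ∈ {z : X | (x, z) ∈ S.r i} := hz
      rw [ha] at this; exact this
  set f : X → X := fun x => (hf x).choose with hf_def
  have hf_mem : ∀ x, (x, f x) ∈ S.r i := fun x => (hf x).choose_spec.1
  have hf_eq : ∀ x z, (x, z) ∈ S.r i → z = f x := fun x z h => (hf x).choose_spec.2 z h
  -- positivity of intersection numbers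
  have hp : ∀ (x y : X) (j : Fin (d + 1)),
      0 < S.pNum i j (rel (x, y)) ↔ (f x, y) ∈ S.r j := by
    intro x y j
    have hcard := S.ncard_eq i j (rel (x, y)) (x, y) (hrel_mem _)
    have hset : {z : X | ((x, y).1, z) ∈ S.r i ∧ (z, (x, y).2) ∈ S.r j} =
        if (f x, y) ∈ S.r j then {f x} else ∅ := by
      split_ifs with h
      · ext z
        simp only [Set.mem_setOf_eq, Set.mem_singleton_iff]
        constructor
        · rintro ⟨h1, _⟩; exact hf_eq x z h1
        · rintro rfl; exact ⟨hf_mem x, h⟩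
      · ext z
        simp only [Set.mem_setOf_eq, Set.mem_empty_iff_false, iff_false, not_and]
        intro h1 h2
        exact h ((hf_eq x z h1) ▸ h2)
    rw [← hcard, hset]
    split_ifs with h <;> simp [h]
  -- entrywise formula for v
  have hv_entry : ∀ x y : X, v x y = c (rel (x, y)) := by
    intro x y
    rw [hv]
    rw [Matrix.sum_apply]
    have : ∀ j : Fin (d + 1), (c j • S.adj 𝔽 j) x y = if j = rel (x, y) then c j else 0 := by
      intro j
      simp only [Matrix.smul_apply, AssocScheme.adj, Matrix.of_apply, smul_eq_mul]
      by_cases h : (x, y) ∈ S.r j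
      · rw [if_pos h, if_pos ((hrel_eq _ _ h).symm), mul_one]
      · rw [if_neg h, if_neg, mul_zero]
        intro he; exact h (he ▸ hrel_mem (x, y))
    simp only [this]
    simp
  -- A_i * v = v
  have hAv : S.adj 𝔽 i * v = v := by
    have := htriv.2.2 i
    rw [hi'] at this
    simpa using this
  -- the key identity: c (rel (f x, y)) = c (rel (x, y))
  have hkey : ∀ x y : X, c (rel (f x, y)) = c (rel (x, y)) := by
    intro x y
    have h1 : (S.adj 𝔽 i * v) x y = v x y := by rw [hAv]
    rw [Matrix.mul_apply] at h1
    have h2 : ∀ z : X, S.adj 𝔽 i x z * v z y = if z = f x then v (f x) y else 0 := by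
      intro z
      simp only [AssocScheme.adj, Matrix.of_apply]
      by_cases h : (x, z) ∈ S.r i
      · rw [if_pos h, if_pos (hf_eq x z h), one_mul, hf_eq x z h]
      · rw [if_neg h, if_neg, zero_mul]
        intro he; exact h (he ▸ hf_mem x)
    simp only [h2, Finset.sum_ite_eq' Finset.univ (f x), Finset.mem_univ, if_pos] at h1
    rw [hv_entry, hv_entry] at h1
    exact h1
  -- conclude
  ext k
  obtain ⟨⟨x, y⟩, hxy⟩ := S.r_nonempty k
  have hk : rel (x, y) = k := hrel_eq _ _ hxy
  simp only [AssocScheme.cmul, Set.mem_setOf_eq, Set.mem_singleton_iff]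
  constructor
  · rintro ⟨u, rfl, j, hj, hpos⟩
    rw [← hk, hp x y j] at hpos
    have hj' : rel (f x, y) = j := hrel_eq _ _ hpos
    rw [← hk, ← hkey x y, hj']
    exact hj
  · intro hck
    refine ⟨i, rfl, rel (f x, y), ?_, ?_⟩
    · rw [hkey x y, hk]; exact hck
    · rw [← hk, hp]; exact hrel_mem _
end

section
/- Let 0 ≠ v = Σ_{i=0}^d c_i A̅_i ∈ 𝔽S satisfy A̅_j v = k̅_j v for every 0 ≤ j ≤ d. If R_0 ∈ U(v), then for every 0 ≤ u ≤ d with p ∤ k_u one has R_u ∈ U(v) and c_u = c_0. -/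
open scoped Classical

/-- Let `0 ≠ v = Σ c_i A̅_i` satisfy `A̅_j v = k̅_j v` for all `j`. If `R_0 ∈ U(v)`,
then for every `u` with `p ∤ k_u` one has `R_u ∈ U(v)` and `c_u = c_0`. -/
theorem mem_support_and_coeff_eq_of_not_dvd_val
    {X : Type*} [Fintype X] [Nonempty X] {d : ℕ} (S : AssocScheme X d)
    (𝔽 : Type*) [Field 𝔽] (p : ℕ) [Fact p.Prime] [CharP 𝔽 p]
    (c : Fin (d + 1) → 𝔽) (v : Matrix X X 𝔽)
    (hv : v = ∑ i : Fin (d + 1), c i • S.adj 𝔽 i) (hv0 : v ≠ 0)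
    (heig : ∀ j : Fin (d + 1), S.adj 𝔽 j * v = (S.val j : 𝔽) • v)
    (h0 : c 0 ≠ 0) :
    ∀ u : Fin (d + 1), ¬ p ∣ S.val u → c u ≠ 0 ∧ c u = c 0 := by
  classical
  -- unique relation index for a pair
  have huniq : ∀ {i j : Fin (d + 1)} {q : X × X}, q ∈ S.r i → q ∈ S.r j → i = j := by
    intro i j q hi hj
    obtain ⟨k, hk, hu⟩ := S.existsUnique_rel q
    rw [hu i hi, hu j hj]
  -- star is an involution
  have hss : ∀ i : Fin (d + 1), S.star (S.star i) = i := by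
    intro i
    obtain ⟨q, hq⟩ := S.r_nonempty i
    have h1 : (q.2, q.1) ∈ S.r (S.star i) := (S.mem_star i (q.2, q.1)).mpr (by simpa using hq)
    have h2 : q ∈ S.r (S.star (S.star i)) := by
      have := (S.mem_star (S.star i) q).mpr h1
      exact this
    exact huniq h2 hq
  -- intersection numbers as finset cards
  have hcard : ∀ (i j k : Fin (d + 1)) (x y : X), (x, y) ∈ S.r k →
      (Finset.univ.filter fun z => (x, z) ∈ S.r i ∧ (z, y) ∈ S.r j).card = S.pNum i j k := by
    intro i j k x y hq
    have h := S.ncard_eq i j k (x, y) hq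
    rw [Set.ncard_eq_toFinset_card'] at h
    simpa [Set.toFinset_setOf] using h
  have hdiag : ∀ x : X, (x, x) ∈ S.r 0 := by
    intro x; rw [S.r_zero]; exact rfl
  -- valency as a row count
  have hval : ∀ (i : Fin (d + 1)) (x : X),
      (Finset.univ.filter fun z => (x, z) ∈ S.r i).card = S.val i := by
    intro i x
    rw [AssocScheme.val, ← hcard i (S.star i) 0 x x (hdiag x)]
    congr 1
    apply Finset.filter_congr
    intro z _
    constructor
    · intro h; exact ⟨h, (S.mem_star i (z, x)).mpr h⟩
    · intro h; exact h.1
  -- valency is star-invariant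
  have hvs : ∀ i : Fin (d + 1), S.val (S.star i) = S.val i := by
    intro i
    have hN : ∀ j : Fin (d + 1),
        (∑ q : X × X, if q ∈ S.r j then 1 else 0) = Fintype.card X * S.val j := by
      intro j
      rw [Fintype.sum_prod_type]
      have hrow : ∀ x : X, (∑ z : X, if (x, z) ∈ S.r j then 1 else 0) = S.val j := by
        intro x
        rw [Finset.sum_boole]
        exact_mod_cast hval j x
      rw [Finset.sum_congr rfl (fun x _ => hrow x), Finset.sum_const, Finset.card_univ,
        smul_eq_mul]
    have key : (∑ q : X × X, if q ∈ S.r (S.star i) then 1 else 0)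
        = ∑ q : X × X, if q ∈ S.r i then 1 else 0 := by
      rw [← Equiv.sum_comp (Equiv.prodComm X X) (fun q => if q ∈ S.r (S.star i) then 1 else 0)]
      apply Finset.sum_congr rfl
      intro q _
      have h2 : (q.2, q.1) ∈ S.r (S.star i) ↔ q ∈ S.r i := by
        simpa using S.mem_star i (q.2, q.1)
      simp only [Equiv.prodComm_apply, Prod.swap]
      simp [h2]
    have h1 := hN (S.star i)
    rw [key, hN i] at h1
    exact (Nat.eq_of_mul_eq_mul_left Fintype.card_pos h1).symm
  -- value of v at a point of r k
  have hvxy : ∀ (k : Fin (d + 1)) (x y : X), (x, y) ∈ S.r k → v x y = c k := by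
    intro k x y hq
    rw [hv]
    have : ∀ i : Fin (d + 1), (c i • S.adj 𝔽 i) x y = if i = k then c i else 0 := by
      intro i
      by_cases h : i = k
      · subst h
        simp [AssocScheme.adj, hq]
      · have : (x, y) ∉ S.r i := fun hmem => h (huniq hmem hq)
        simp [AssocScheme.adj, this, h]
    rw [Matrix.sum_apply]
    rw [Finset.sum_congr rfl (fun i _ => this i), Finset.sum_ite_eq' Finset.univ k c]
    simp
  -- the coefficient identity
  have hcoef : ∀ j k : Fin (d + 1),
      (∑ i : Fin (d + 1), (S.pNum j i k : 𝔽) * c i) = (S.val j : 𝔽) * c k := by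
    intro j k
    obtain ⟨⟨x, y⟩, hq⟩ := S.r_nonempty k
    have h := congrFun (congrFun (heig j) x) y
    have hlhs : (S.adj 𝔽 j * v) x y = ∑ i : Fin (d + 1), (S.pNum j i k : 𝔽) * c i := by
      rw [Matrix.mul_apply]
      have hvz : ∀ z : X, v z y = ∑ i : Fin (d + 1), c i * (S.adj 𝔽 i z y) := by
        intro z
        rw [hv, Matrix.sum_apply]
        apply Finset.sum_congr rfl
        intro i _
        simp [Matrix.smul_apply]
      calc (∑ z : X, S.adj 𝔽 j x z * v z y)
          = ∑ z : X, ∑ i : Fin (d + 1), c i * (S.adj 𝔽 j x z * S.adj 𝔽 i z y) := by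
            apply Finset.sum_congr rfl
            intro z _
            rw [hvz z, Finset.mul_sum]
            apply Finset.sum_congr rfl
            intro i _
            ring
        _ = ∑ i : Fin (d + 1), c i * ∑ z : X, S.adj 𝔽 j x z * S.adj 𝔽 i z y := by
            rw [Finset.sum_comm]
            apply Finset.sum_congr rfl
            intro i _
            rw [Finset.mul_sum]
        _ = ∑ i : Fin (d + 1), (S.pNum j i k : 𝔽) * c i := by
            apply Finset.sum_congr rfl
            intro i _
            have : (∑ z : X, S.adj 𝔽 j x z * S.adj 𝔽 i z y) = (S.pNum j i k : 𝔽) := by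
              have heach : ∀ z : X, S.adj 𝔽 j x z * S.adj 𝔽 i z y
                  = if (x, z) ∈ S.r j ∧ (z, y) ∈ S.r i then (1 : 𝔽) else 0 := by
                intro z
                simp only [AssocScheme.adj, Matrix.of_apply]
                by_cases h1 : (x, z) ∈ S.r j <;> by_cases h2 : (z, y) ∈ S.r i <;>
                  simp [h1, h2]
              rw [Finset.sum_congr rfl (fun z _ => heach z), Finset.sum_boole,
                hcard j i k x y hq]
            rw [this]
            ring
    have hrhs : ((S.val j : 𝔽) • v) x y = (S.val j : 𝔽) * c k := by
      rw [Matrix.smul_apply, hvxy k x y hq]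
      simp
    rw [hlhs, hrhs] at h
    exact h
  -- pNum j i 0 = 0 unless i = star j
  have hp0 : ∀ j i : Fin (d + 1), i ≠ S.star j → S.pNum j i 0 = 0 := by
    intro j i hne
    obtain ⟨x⟩ := (inferInstance : Nonempty X)
    rw [← S.ncard_eq j i 0 (x, x) (hdiag x)]
    have : {z : X | ((x, x).1, z) ∈ S.r j ∧ (z, (x, x).2) ∈ S.r i} = ∅ := by
      ext z
      simp only [Set.mem_setOf_eq, Set.mem_empty_iff_false, iff_false, not_and]
      intro h1 h2
      exact hne (huniq h2 ((S.mem_star j (z, x)).mpr h1))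
    rw [this, Set.ncard_empty]
  -- the key relation: k_j c_{j*} = k_j c_0
  have hk0 : ∀ j : Fin (d + 1), (S.val j : 𝔽) * c (S.star j) = (S.val j : 𝔽) * c 0 := by
    intro j
    have h := hcoef j 0
    rw [Finset.sum_eq_single (S.star j)] at h
    · rwa [AssocScheme.val] at h
    · intro i _ hne
      rw [hp0 j i hne]
      simp
    · intro habs
      exact absurd (Finset.mem_univ _) habs
  -- conclude
  intro u hu
  have hu' : ¬ p ∣ S.val (S.star u) := by rwa [hvs u]
  have hne : ((S.val (S.star u) : 𝔽)) ≠ 0 := fun h =>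
    hu' ((CharP.cast_eq_zero_iff 𝔽 p _).mp h)
  have h := hk0 (S.star u)
  rw [hss u] at h
  have hcu : c u = c 0 := mul_left_cancel₀ hne h
  exact ⟨hcu ▸ h0, hcu⟩
end

section
/- Let T be a singular subset of an association scheme S. Then T is a closed subset of S if and only if the complex product R_{i*}R_j is contained in T for all 0 ≤ i ≠ j ≤ d with R_i, R_j ∈ T. -/
open scoped Classical

section Aux

variable {X : Type*} [Fintype X] [Nonempty X] {d : ℕ} (S : AssocScheme X d)

lemma aux_pNum_zero_left (j : Fin (d + 1)) : 0 < S.pNum 0 j j := by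
  obtain ⟨q, hq⟩ := S.r_nonempty j
  rw [← S.ncard_eq 0 j j q hq, Set.ncard_pos (Set.toFinite _)]
  exact ⟨q.1, by simp [S.r_zero], hq⟩

lemma aux_pNum_zero_right (j : Fin (d + 1)) : 0 < S.pNum j 0 j := by
  obtain ⟨q, hq⟩ := S.r_nonempty j
  rw [← S.ncard_eq j 0 j q hq, Set.ncard_pos (Set.toFinite _)]
  exact ⟨q.2, hq, by simp [S.r_zero]⟩

lemma aux_star_zero : S.star 0 = 0 := by
  obtain ⟨q, hq⟩ := S.r_nonempty (S.star 0)
  have h1 : (q.2, q.1) ∈ S.r 0 := (S.mem_star 0 q).1 hq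
  have h2 : q ∈ S.r 0 := by
    rw [S.r_zero] at h1 ⊢
    exact h1.symm
  obtain ⟨i, -, hu⟩ := S.existsUnique_rel q
  exact (hu _ hq).trans (hu _ h2).symm

lemma aux_val_zero : S.val 0 = 1 := by
  obtain ⟨q, hq⟩ := S.r_nonempty 0
  have hq12 : q.1 = q.2 := by rw [S.r_zero] at hq; exact hq
  unfold AssocScheme.val
  rw [aux_star_zero, ← S.ncard_eq 0 0 0 q hq]
  have hset : {z : X | (q.1, z) ∈ S.r 0 ∧ (z, q.2) ∈ S.r 0} = {q.1} := by
    ext z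
    simp only [Set.mem_setOf_eq, S.r_zero, Set.mem_singleton_iff]
    constructor
    · rintro ⟨h1, -⟩; exact h1.symm
    · rintro rfl; exact ⟨rfl, hq12⟩
  rw [hset, Set.ncard_singleton]

lemma aux_zero_mem_thinRadical : (0 : Fin (d + 1)) ∈ S.thinRadical :=
  aux_val_zero S

end Aux

/-- A singular subset `T` of `S` is closed iff `R_{i*}R_j ⊆ T` for all `i ≠ j`
with `R_i, R_j ∈ T`. -/
theorem isClosedSubset_iff_of_isSingular
    {X : Type*} [Fintype X] [Nonempty X] {d : ℕ} (S : AssocScheme X d)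
    (T : Set (Fin (d + 1))) (hT : S.IsSingular T) :
    S.IsClosedSubset T ↔
      ∀ i ∈ T, ∀ j ∈ T, i ≠ j → S.cmul {S.star i} {j} ⊆ T := by
  obtain ⟨hrad, hsing⟩ := hT
  have h0T : (0 : Fin (d + 1)) ∈ T := hrad (aux_zero_mem_thinRadical S)
  constructor
  · rintro ⟨-, hclosed⟩ i hi j hj _ k hk
    obtain ⟨u, hu, v, hv, hp⟩ := hk
    exact hclosed ⟨u, ⟨i, hi, hu.symm⟩, v, hv.symm ▸ hj, hp⟩
  · intro h
    refine ⟨⟨0, h0T⟩, ?_⟩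
    rintro k ⟨u, ⟨i, hi, rfl⟩, j, hj, hp⟩
    by_cases hij : i = j
    · subst hij
      apply hsing 0 (aux_zero_mem_thinRadical S) i 0 h0T
      exact ⟨k, ⟨S.star i, ⟨0, rfl, S.star i, rfl, aux_pNum_zero_left S _⟩,
        i, rfl, hp⟩, 0, rfl, aux_pNum_zero_right S k⟩
    · exact h i hi j hj hij ⟨S.star i, rfl, j, rfl, hp⟩
end
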